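/- Let X = (X₁,…,X_d) be a strict row contraction of n×n complex matrices and let B̆ ∈ M_{n³×n}(ℂ) be the boomerang matrix. Then for every H ∈ M_n(ℂ), B̆ᵀ·(P_X ⊗ (H − Σᵢ₌₁^d Xᵢ H Xᵢ*))·B̆ = H. -/

import Mathlib

/-!
Common definitions: the ψ-involution, `vec`, the elementary Pick matrix, the Choi matrix,
Kronecker-product helpers with right-associated index types, the boomerang matrices, the
commutation matrix, and the Moore–Penrose predicate.
-/

open Matrix Filter
open scoped Kronecker Matrix.Norms.L2Operator ComplexOrder

noncomputable section

/-- Square `n × n` complex matrices. -/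
abbrev Mat (n : ℕ) := Matrix (Fin n) (Fin n) ℂ

/-- Entrywise complex conjugate of a matrix. -/
def conjM {m k : Type*} (A : Matrix m k ℂ) : Matrix m k ℂ := A.map (starRingEnd ℂ)

/-- `vec A` stacks the columns of `A`: the slot `(j, i)` (column `j`, row `i`) holds `A i j`. -/
def vecM (n : ℕ) (A : Mat n) : Matrix (Fin n × Fin n) Unit ℂ := Matrix.of fun p _ => A p.2 p.1

/-- The `ψ`-involution on `M_{n²}(ℂ)`: the linear map determined on matrix units by
`ψ(E_{ij} ⊗ E_{kℓ}) = E_{ℓj} ⊗ E_{ki}`, equivalently `ψ(A ⊗ B) = vec(B)·vec(A)ᵀ`. -/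
def psi (n : ℕ) (U : Matrix (Fin n × Fin n) (Fin n × Fin n) ℂ) :
    Matrix (Fin n × Fin n) (Fin n × Fin n) ℂ :=
  Matrix.of fun p q => U (q.2, p.2) (q.1, p.1)

/-- `X` is a strict row contraction: `‖Σᵢ Xᵢ Xᵢ*‖ < 1` in the L² operator norm. -/
def StrictRowContraction {n : ℕ} {ι : Type*} [Fintype ι] (X : ι → Mat n) : Prop :=
  ‖∑ i, X i * (X i)ᴴ‖ < 1

/-- The elementary Pick matrix `P_X = ψ((I_{n²} − Σᵢ conj(Xᵢ) ⊗ Xᵢ)⁻¹)`. -/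
def pick {n : ℕ} {ι : Type*} [Fintype ι] (X : ι → Mat n) :
    Matrix (Fin n × Fin n) (Fin n × Fin n) ℂ :=
  psi n ((1 - ∑ i, conjM (X i) ⊗ₖ X i)⁻¹)

/-- The Choi matrix `𝔠_n = Σ_{i,j} E_{ij} ⊗ E_{ij} ∈ M_{n²}(ℂ)`. -/
def choiM (n : ℕ) : Matrix (Fin n × Fin n) (Fin n × Fin n) ℂ :=
  ∑ i : Fin n, ∑ j : Fin n, single i j (1 : ℂ) ⊗ₖ single i j (1 : ℂ)

/-- `X^w = X_{i₁} ⋯ X_{i_k}` for a word `w = i₁⋯i_k` in the free monoid. -/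
def wordProd {n : ℕ} {ι : Type*} (X : ι → Mat n) (w : List ι) : Mat n := (w.map X).prod

/-- Kronecker product `A ⊗ C` where `A` carries a product index, with the resulting
index types flattened right-associatively (`(a × b) × c ↦ a × (b × c)`). -/
def krA {a b c a' b' c' : Type*} (A : Matrix (a × b) (a' × b') ℂ) (C : Matrix c c' ℂ) :
    Matrix (a × b × c) (a' × b' × c') ℂ :=
  Matrix.of fun p q => A (p.1, p.2.1) (q.1, q.2.1) * C p.2.2 q.2.2

/-- Kronecker product `M ⊗ C` where `M` carries a triple product index, flattened
right-associatively. -/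
def krT {a b c e a' b' c' e' : Type*} (M : Matrix (a × b × c) (a' × b' × c') ℂ)
    (C : Matrix e e' ℂ) : Matrix (a × b × c × e) (a' × b' × c' × e') ℂ :=
  Matrix.of fun p q => M (p.1, p.2.1, p.2.2.1) (q.1, q.2.1, q.2.2.1) * C p.2.2.2 q.2.2.2

/-- Triple Kronecker product `A ⊗ B ⊗ C` with right-associated index types. -/
def kr3 {a b c a' b' c' : Type*} (A : Matrix a a' ℂ) (B : Matrix b b' ℂ) (C : Matrix c c' ℂ) :
    Matrix (a × b × c) (a' × b' × c') ℂ :=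
  Matrix.of fun p q => A p.1 q.1 * B p.2.1 q.2.1 * C p.2.2 q.2.2

/-- The boomerang matrix `B̆ = Σ_{i,j} e_i ⊗ e_j ⊗ E_{ij} ∈ M_{n³×n}(ℂ)`:
its entry at row `(i, j, k)`, column `ℓ` is `δ_{k i} δ_{ℓ j}`. -/
def boom (n : ℕ) : Matrix (Fin n × Fin n × Fin n) (Fin n) ℂ :=
  Matrix.of fun p l => if p.2.2 = p.1 ∧ l = p.2.1 then 1 else 0

/-- The commutation (permutation) matrix `Q_{n,r}`, satisfying
`Q_{n,r} (U ⊗ V) Q_{n,r}ᵀ = V ⊗ U` for `U ∈ M_n`, `V ∈ M_r`. -/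
def commMat (n r : ℕ) : Matrix (Fin r × Fin n) (Fin n × Fin r) ℂ :=
  Matrix.of fun p q => if p.2 = q.1 ∧ p.1 = q.2 then 1 else 0

/-- `Σ_{i,j} e_i ⊗ e_j ⊗ I_r ⊗ E_{ij}`: its entry at row `(i, j, a, k)`, column `(b, ℓ)`
is `δ_{k i} δ_{ℓ j} δ_{a b}`. -/
def preBoom (n r : ℕ) : Matrix (Fin n × Fin n × Fin r × Fin n) (Fin r × Fin n) ℂ :=
  Matrix.of fun p q => if p.2.2.2 = p.1 ∧ q.2 = p.2.1 ∧ p.2.2.1 = q.1 then 1 else 0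

/-- The ampliated boomerang matrix `B̆_r = (Σ_{i,j} e_i ⊗ e_j ⊗ I_r ⊗ E_{ij}) · Q_{n,r}`. -/
def boomAmp (n r : ℕ) : Matrix (Fin n × Fin n × Fin r × Fin n) (Fin n × Fin r) ℂ :=
  preBoom n r * commMat n r

/-- `B` is the Moore–Penrose pseudoinverse of `A` (the four Penrose conditions). -/
structure IsMoorePenroseInv {m k : Type*} [Fintype m] [Fintype k]
    (A : Matrix m k ℂ) (B : Matrix k m ℂ) : Prop where
  mul_inv_mul : A * B * A = A
  inv_mul_inv : B * A * B = B
  hermitian_mul_inv : (A * B)ᴴ = A * B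
  hermitian_inv_mul : (B * A)ᴴ = B * A

/-!
Under `vec`, the matrix `I − Σᵢ conj(Xᵢ) ⊗ Xᵢ` acts as `H ↦ H − Σᵢ Xᵢ H Xᵢ*`. Writing
`R = [X₁ ⋯ X_d]`, that map sends `H` to `R (I_d ⊗ H) R*`, and the ampliation `H ↦ I_d ⊗ H` is a
⋆-homomorphism, hence contractive; so its norm is at most `‖R R*‖ = ‖Σᵢ Xᵢ Xᵢ*‖ < 1`, and
`I − Σᵢ conj(Xᵢ) ⊗ Xᵢ` is invertible. On the other side, compressing `ψ(U) ⊗ M` by the boomerang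
matrix gives the matrix whose `vec` is `U · vec M`. With `U` the inverse and `M = H − Σᵢ Xᵢ H Xᵢ*`
this is `vec H`.
-/

namespace Matrix

variable {m ι : Type*} [Fintype m] [DecidableEq m] [Fintype ι] [DecidableEq ι]

def blockDiagonalConstStarAlgHom : Matrix m m ℂ →⋆ₐ[ℂ] Matrix (m × ι) (m × ι) ℂ where
  toFun M := blockDiagonal fun _ => M
  map_one' := blockDiagonal_one
  map_mul' _ _ := blockDiagonal_mul _ _
  map_zero' := blockDiagonal_zero
  map_add' _ _ := blockDiagonal_add _ _
  commutes' r := by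
    simp only [Algebra.algebraMap_eq_smul_one]
    exact (blockDiagonal_smul r (1 : ι → Matrix m m ℂ)).trans (by rw [blockDiagonal_one])
  map_star' M := (blockDiagonal_conjTranspose _).symm

lemma norm_blockDiagonal_const_le (M : Matrix m m ℂ) :
    ‖blockDiagonal fun _ : ι => M‖ ≤ ‖M‖ :=
  NonUnitalStarAlgHom.norm_apply_le (blockDiagonalConstStarAlgHom (ι := ι)) M

end Matrix

section RowContraction

variable {m ι α : Type*} [Fintype m] [Fintype ι]

def rowConcat (X : ι → Matrix m m α) : Matrix m (m × ι) α :=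
  Matrix.of fun i p => X p.2 i p.1

lemma rowConcat_mul_blockDiagonal [DecidableEq ι] [NonUnitalNonAssocSemiring α]
    (X : ι → Matrix m m α) (M : Matrix m m α) :
    rowConcat X * blockDiagonal (fun _ : ι => M) = rowConcat fun i => X i * M := by
  ext i ⟨k, t⟩
  simp [rowConcat, Matrix.mul_apply, blockDiagonal_apply, Fintype.sum_prod_type]

lemma rowConcat_mul_conjTranspose_rowConcat [NonUnitalNonAssocSemiring α] [StarRing α]
    (X Y : ι → Matrix m m α) :
    rowConcat X * (rowConcat Y)ᴴ = ∑ i, X i * (Y i)ᴴ := by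
  ext k l
  simp only [rowConcat, Matrix.mul_apply, Matrix.sum_apply, of_apply, conjTranspose_apply,
    Fintype.sum_prod_type]
  exact Finset.sum_comm

lemma norm_sum_mul_mul_conjTranspose_le [DecidableEq m] [DecidableEq ι] (X : ι → Matrix m m ℂ)
    (M : Matrix m m ℂ) :
    ‖∑ i, X i * M * (X i)ᴴ‖ ≤ ‖∑ i, X i * (X i)ᴴ‖ * ‖M‖ := by
  set R := rowConcat X
  have hR : ‖∑ i, X i * (X i)ᴴ‖ = ‖R‖ * ‖R‖ := by
    rw [← rowConcat_mul_conjTranspose_rowConcat, ← l2_opNorm_conjTranspose R,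
      ← l2_opNorm_conjTranspose_mul_self, conjTranspose_conjTranspose]
  calc ‖∑ i, X i * M * (X i)ᴴ‖ = ‖R * blockDiagonal (fun _ : ι => M) * Rᴴ‖ := by
        rw [rowConcat_mul_blockDiagonal, rowConcat_mul_conjTranspose_rowConcat]
    _ ≤ ‖R‖ * ‖blockDiagonal (fun _ : ι => M)‖ * ‖Rᴴ‖ :=
        (l2_opNorm_mul _ _).trans (by gcongr; exact l2_opNorm_mul _ _)
    _ ≤ ‖R‖ * ‖M‖ * ‖R‖ := by
        rw [l2_opNorm_conjTranspose]; gcongr; exact norm_blockDiagonal_const_le M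
    _ = ‖∑ i, X i * (X i)ᴴ‖ * ‖M‖ := by rw [hR]; ring

lemma eq_zero_of_eq_sum_mul_mul_conjTranspose [DecidableEq ι] {n : ℕ} {X : ι → Mat n}
    (hX : StrictRowContraction X) {M : Mat n} (hM : M = ∑ i, X i * M * (X i)ᴴ) : M = 0 := by
  have h := norm_sum_mul_mul_conjTranspose_le X M
  rw [← hM] at h
  unfold StrictRowContraction at hX
  exact norm_eq_zero.mp <| le_antisymm (by nlinarith [norm_nonneg M]) (norm_nonneg M)

end RowContraction

section Pick

variable {n : ℕ} {m ι : Type*} [Fintype m] [Fintype ι]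

lemma sum_kronecker_mulVec_vec (X : ι → Matrix m m ℂ) (H : Matrix m m ℂ) :
    (∑ i, conjM (X i) ⊗ₖ X i) *ᵥ vec H = vec (∑ i, X i * H * (X i)ᴴ) := by
  rw [sum_mulVec, vec_sum]
  exact Finset.sum_congr rfl fun i _ => kronecker_mulVec_vec _ _ _

lemma one_sub_sum_kronecker_mulVec_vec [DecidableEq m] (X : ι → Matrix m m ℂ)
    (H : Matrix m m ℂ) :
    (1 - ∑ i, conjM (X i) ⊗ₖ X i) *ᵥ vec H = vec (H - ∑ i, X i * H * (X i)ᴴ) := by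
  rw [sub_mulVec, one_mulVec, sum_kronecker_mulVec_vec, vec_sub]

lemma isUnit_one_sub_sum_kronecker [DecidableEq ι] {X : ι → Mat n}
    (hX : StrictRowContraction X) : IsUnit (1 - ∑ i, conjM (X i) ⊗ₖ X i) := by
  rw [← mulVec_injective_iff_isUnit, ← coe_mulVecLin, injective_iff_map_eq_zero]
  intro w hw
  obtain ⟨M, rfl⟩ := vec_bijective.surjective w
  rw [mulVecLin_apply, one_sub_sum_kronecker_mulVec_vec, vec_eq_zero_iff, sub_eq_zero] at hw
  rw [vec_eq_zero_iff]
  exact eq_zero_of_eq_sum_mul_mul_conjTranspose hX hw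

lemma vec_boom_transpose_mul_krA_psi_mul_boom (U : Matrix (Fin n × Fin n) (Fin n × Fin n) ℂ)
    (M : Mat n) : vec ((boom n)ᵀ * krA (psi n U) M * boom n) = U *ᵥ vec M := by
  ext ⟨l', l⟩
  simp [vec, mulVec, dotProduct, mul_apply, boom, krA, psi, Fintype.sum_prod_type, ite_and]

end Pick

/-- For a strict row contraction `X` and every `H ∈ M_n(ℂ)`,
`B̆ᵀ·(P_X ⊗ (H − Σᵢ Xᵢ H Xᵢ*))·B̆ = H`. -/
theorem boomerang_pick_compression {n d : ℕ} (X : Fin d → Mat n)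
    (hX : StrictRowContraction X) (H : Mat n) :
    (boom n)ᵀ * krA (pick X) (H - ∑ i, X i * H * (X i)ᴴ) * boom n = H := by
  have hdet := (isUnit_iff_isUnit_det _).mp (isUnit_one_sub_sum_kronecker hX)
  rw [← vec_inj, pick, vec_boom_transpose_mul_krA_psi_mul_boom,
    ← one_sub_sum_kronecker_mulVec_vec, mulVec_mulVec, nonsing_inv_mul _ hdet, one_mulVec]
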